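/- arXiv:1710.05511 — 3 statements merged into one kernel-verified Lean document; each statement's English description precedes it below -/
import Mathlib

section
/- Let Γ_1,…,Γ_n be Hermitian d×d complex matrices, γ_1,…,γ_n real numbers, and S the corresponding constraint set. Let ρ ∈ S and let ∇ be a Hermitian d×d complex matrix. Suppose there exist λ ∈ ℝⁿ and a positive semidefinite d×d matrix Z such that ∇ + Σ_{i=1}^n λ_i Γ_iᵀ − Z = 0 and Tr(Zᵀ ρ) = 0 (Karush–Kuhn–Tucker conditions). Then for every σ ∈ S one has Re Tr((σ − ρ)ᵀ ∇) = Re Tr(Zᵀ σ) ≥ 0. -/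
open scoped BigOperators ComplexOrder Matrix

/-!
Since `Z = ∇ + Σ λᵢ Γᵢᵀ`, and `Tr((σ - ρ)ᵀ Γᵢᵀ) = Tr(Γᵢ σ) - Tr(Γᵢ ρ) = γᵢ - γᵢ = 0`, the
linearized change `Tr((σ - ρ)ᵀ ∇)` equals `Tr(Zᵀ σ) - Tr(Zᵀ ρ) = Tr(Zᵀ σ)` by complementary
slackness. The trace of a product of two positive semidefinite matrices is nonnegative: writing
`A = Cᴴ C`, it is the trace of the positive semidefinite matrix `C B Cᴴ`.
-/

namespace Matrix

lemma trace_transpose_mul_sum_smul_transpose_eq_zero {m ι R S : Type*} [Fintype m] [Fintype ι]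
    [CommSemiring R] [Monoid S] [DistribMulAction S R] [SMulCommClass S R R]
    {Γ : ι → Matrix m m R} {X : Matrix m m R} (c : ι → S) (h : ∀ i, (Γ i * X).trace = 0) :
    (Xᵀ * ∑ i, c i • (Γ i)ᵀ).trace = 0 := by
  rw [Matrix.mul_sum, trace_sum]
  refine Finset.sum_eq_zero fun i _ => ?_
  rw [Matrix.mul_smul, trace_smul, ← transpose_mul, trace_transpose, h i, smul_zero]

lemma PosSemidef.trace_mul_nonneg {n 𝕜 : Type*} [Fintype n] [RCLike 𝕜] {A B : Matrix n n 𝕜}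
    (hA : A.PosSemidef) (hB : B.PosSemidef) : 0 ≤ (A * B).trace := by
  classical
  open scoped MatrixOrder in
  obtain ⟨C, rfl⟩ := CStarAlgebra.nonneg_iff_eq_star_mul_self.mp hA.nonneg
  rw [star_eq_conjTranspose, Matrix.mul_assoc, trace_mul_comm]
  exact (hB.mul_mul_conjTranspose_same C).trace_nonneg

end Matrix

theorem kkt_linearized_nonneg_general
    {d n : ℕ}
    (Γ : Fin n → Matrix (Fin d) (Fin d) ℂ)
    (γ : Fin n → ℝ)
    (ρ : Matrix (Fin d) (Fin d) ℂ)
    (hρc : ∀ i, (Γ i * ρ).trace = (γ i : ℂ))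
    (grad : Matrix (Fin d) (Fin d) ℂ)
    (lam : Fin n → ℝ) (Z : Matrix (Fin d) (Fin d) ℂ) (hZ : Z.PosSemidef)
    (hkkt1 : grad + ∑ i, lam i • (Γ i)ᵀ - Z = 0)
    (hkkt2 : (Zᵀ * ρ).trace = 0) :
    ∀ σ : Matrix (Fin d) (Fin d) ℂ, σ.PosSemidef → (∀ i, (Γ i * σ).trace = (γ i : ℂ)) →
      (((σ - ρ)ᵀ * grad).trace).re = ((Zᵀ * σ).trace).re ∧
        0 ≤ ((Zᵀ * σ).trace).re := by
  intro σ hσ hσc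
  have hgrad : grad = Z - ∑ i, lam i • (Γ i)ᵀ := eq_sub_of_add_eq (sub_eq_zero.mp hkkt1)
  have hΓ : ∀ i, (Γ i * (σ - ρ)).trace = 0 := fun i => by
    rw [Matrix.mul_sub, Matrix.trace_sub, hσc, hρc, sub_self]
  have hlin : ((σ - ρ)ᵀ * grad).trace = (Zᵀ * σ).trace := by
    rw [hgrad, Matrix.mul_sub, Matrix.trace_sub,
      Matrix.trace_transpose_mul_sum_smul_transpose_eq_zero lam hΓ, sub_zero,
      ← Matrix.trace_transpose, Matrix.transpose_mul, Matrix.transpose_transpose, Matrix.mul_sub,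
      Matrix.trace_sub, hkkt2, sub_zero]
  exact ⟨congrArg Complex.re hlin, (Complex.nonneg_iff.mp (hZ.transpose.trace_mul_nonneg hσ)).1⟩

/-- KKT conditions imply nonnegativity of the linearized change.
If `ρ ∈ S` and there exist `λ ∈ ℝⁿ` and a positive semidefinite `Z` with
`∇ + Σ λ_i Γ_iᵀ − Z = 0` and `Tr(Zᵀ ρ) = 0`, then for every `σ ∈ S`,
`Re Tr((σ − ρ)ᵀ ∇) = Re Tr(Zᵀ σ) ≥ 0`. -/
theorem kkt_linearized_nonneg
    {d n : ℕ}
    (Γ : Fin n → Matrix (Fin d) (Fin d) ℂ) (hΓ : ∀ i, (Γ i).IsHermitian)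
    (γ : Fin n → ℝ)
    (ρ : Matrix (Fin d) (Fin d) ℂ) (hρ : ρ.PosSemidef)
    (hρc : ∀ i, (Γ i * ρ).trace = (γ i : ℂ))
    (grad : Matrix (Fin d) (Fin d) ℂ) (hgrad : grad.IsHermitian)
    (lam : Fin n → ℝ) (Z : Matrix (Fin d) (Fin d) ℂ) (hZ : Z.PosSemidef)
    (hkkt1 : grad + ∑ i, lam i • (Γ i)ᵀ - Z = 0)
    (hkkt2 : (Zᵀ * ρ).trace = 0) :
    ∀ σ : Matrix (Fin d) (Fin d) ℂ, σ.PosSemidef → (∀ i, (Γ i * σ).trace = (γ i : ℂ)) →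
      (((σ - ρ)ᵀ * grad).trace).re = ((Zᵀ * σ).trace).re ∧
        0 ≤ ((Zᵀ * σ).trace).re :=
  kkt_linearized_nonneg_general Γ γ ρ hρc grad lam Z hZ hkkt1 hkkt2
end

section
/- Let ρ and σ be positive semidefinite d×d complex matrices. Then ‖ρ − σ‖₁² ≤ (Tr ρ + Tr σ)² − 4 ‖√ρ · √σ‖₁², where √ρ and √σ denote the positive semidefinite square roots of ρ and σ. -/
open scoped BigOperators ComplexOrder Matrix

/-- The positive semidefinite square root, as `Matrix.PosSemidef.sqrt` was defined in the older Mathlib. -/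
noncomputable def Matrix.PosSemidef.sqrt {n : Type*} [Fintype n] [DecidableEq n] {𝕜 : Type*} [RCLike 𝕜]
    {A : Matrix n n 𝕜} (hA : A.PosSemidef) : Matrix n n 𝕜 :=
  hA.1.eigenvectorUnitary.1 * Matrix.diagonal ((↑) ∘ (√·) ∘ hA.1.eigenvalues) *
    (star hA.1.eigenvectorUnitary : Matrix n n 𝕜)

/-- The trace norm `‖A‖₁ = Tr √(AᴴA)` of a square complex matrix. -/
noncomputable def traceNorm {d : ℕ} (A : Matrix (Fin d) (Fin d) ℂ) : ℝ :=
  ((Matrix.posSemidef_conjTranspose_mul_self A).sqrt).trace.re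

/-!
Let `W` be the unitary of the polar decomposition `√ρ √σ = W |√ρ √σ|` and put `X = √ρ W`,
`Y = √σ`. Then `ρ = X Xᴴ`, `σ = Y Yᴴ` and `Tr (Xᴴ Y) = ‖√ρ √σ‖₁`. Since
`2 (X Xᴴ - Y Yᴴ) = (X - Y)(X + Y)ᴴ + (X + Y)(X - Y)ᴴ` and the trace norm is attained as
`Re Tr (Vᴴ M)` for the unitary `V` of the polar decomposition of `M`, Cauchy–Schwarz for the
Hilbert–Schmidt inner product gives `‖ρ - σ‖₁ ≤ ‖X - Y‖₂ ‖X + Y‖₂`, and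
`‖X - Y‖₂² ‖X + Y‖₂² = (‖X‖₂² + ‖Y‖₂²)² - 4 (Re ⟪X, Y⟫)² = (Tr ρ + Tr σ)² - 4 ‖√ρ √σ‖₁²`.
-/

open RCLike InnerProductSpace

section

variable {𝕜 E F : Type*} [RCLike 𝕜] [NormedAddCommGroup E] [InnerProductSpace 𝕜 E]

theorem norm_sub_sq_mul_norm_add_sq (u v : E) :
    ‖u - v‖ ^ 2 * ‖u + v‖ ^ 2 = (‖u‖ ^ 2 + ‖v‖ ^ 2) ^ 2 - 4 * re ⟪u, v⟫_𝕜 ^ 2 := by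
  rw [@norm_sub_sq 𝕜, @norm_add_sq 𝕜]
  ring

theorem exists_linearIsometryEquiv_apply_eq_of_norm_eq [FiniteDimensional 𝕜 E]
    [AddCommGroup F] [Module 𝕜 F] (f g : F →ₗ[𝕜] E) (h : ∀ x, ‖f x‖ = ‖g x‖) :
    ∃ e : E ≃ₗᵢ[𝕜] E, ∀ x, e (g x) = f x := by
  have hker : LinearMap.ker g ≤ LinearMap.ker f := fun x hx ↦ by
    rw [LinearMap.mem_ker, ← norm_eq_zero, h, LinearMap.mem_ker.mp hx, norm_zero]
  let L : LinearMap.range g →ₗ[𝕜] E :=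
    ((LinearMap.ker g).liftQ f hker).comp g.quotKerEquivRange.symm.toLinearMap
  have hL : ∀ x, L ⟨g x, LinearMap.mem_range_self g x⟩ = f x := fun x ↦ by
    rw [LinearMap.comp_apply, LinearEquiv.coe_toLinearMap,
      LinearMap.quotKerEquivRange_symm_apply_image]
    rfl
  let L' : LinearMap.range g →ₗᵢ[𝕜] E := ⟨L, by rintro ⟨-, x, rfl⟩; rw [hL x]; exact h x⟩
  refine ⟨L'.extend.toLinearIsometryEquiv rfl, fun x ↦ ?_⟩
  rw [LinearIsometry.coe_toLinearIsometryEquiv]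
  exact (L'.extend_apply ⟨g x, LinearMap.mem_range_self g x⟩).trans (hL x)

end

namespace Matrix

section PolarDecomposition

variable {n 𝕜 : Type*} [Fintype n] [DecidableEq n] [RCLike 𝕜]

namespace PosSemidef

lemma posSemidef_sqrt {A : Matrix n n 𝕜} (hA : A.PosSemidef) : hA.sqrt.PosSemidef := by
  unfold PosSemidef.sqrt
  rw [star_eq_conjTranspose]
  exact (posSemidef_diagonal_iff.mpr fun i ↦ by simp).mul_mul_conjTranspose_same _

lemma sqrt_mul_self {A : Matrix n n 𝕜} (hA : A.PosSemidef) : hA.sqrt * hA.sqrt = A := by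
  conv_rhs => rw [hA.1.spectral_theorem, Unitary.conjStarAlgAut_apply]
  have hU : (star hA.1.eigenvectorUnitary : Matrix n n 𝕜) * hA.1.eigenvectorUnitary = 1 :=
    UnitaryGroup.star_mul_self _
  simp only [PosSemidef.sqrt, Matrix.mul_assoc]
  rw [← Matrix.mul_assoc (star _ : Matrix n n 𝕜), hU, Matrix.one_mul,
    ← Matrix.mul_assoc (diagonal _), diagonal_mul_diagonal]
  congr 3 with i
  simp [← RCLike.ofReal_mul, Real.mul_self_sqrt (hA.eigenvalues_nonneg i)]

end PosSemidef

theorem exists_mem_unitaryGroup_eq_mul_of_conjTranspose_mul_self_eq {M N : Matrix n n 𝕜}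
    (h : Mᴴ * M = Nᴴ * N) : ∃ W ∈ unitaryGroup n 𝕜, M = W * N := by
  have hnorm : ∀ x, ‖toEuclideanCLM (𝕜 := 𝕜) M x‖ = ‖toEuclideanCLM (𝕜 := 𝕜) N x‖ := fun x ↦ by
    rw [← sq_eq_sq₀ (norm_nonneg _) (norm_nonneg _),
      ContinuousLinearMap.apply_norm_sq_eq_inner_adjoint_right,
      ContinuousLinearMap.apply_norm_sq_eq_inner_adjoint_right,
      ← ContinuousLinearMap.star_eq_adjoint, ← ContinuousLinearMap.star_eq_adjoint,
      ← ContinuousLinearMap.mul_def, ← ContinuousLinearMap.mul_def, ← map_star, ← map_star,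
      ← map_mul, ← map_mul, star_eq_conjTranspose, star_eq_conjTranspose, h]
  obtain ⟨e, he⟩ := exists_linearIsometryEquiv_apply_eq_of_norm_eq
    (toEuclideanCLM (𝕜 := 𝕜) M).toLinearMap (toEuclideanCLM (𝕜 := 𝕜) N).toLinearMap hnorm
  let W := (toEuclideanCLM (n := n) (𝕜 := 𝕜)).symm (e : EuclideanSpace 𝕜 n →L[𝕜] _)
  have hW : toEuclideanCLM (n := n) (𝕜 := 𝕜) (W * N) = toEuclideanCLM (n := n) (𝕜 := 𝕜) M := by
    rw [map_mul, StarAlgEquiv.apply_symm_apply]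
    ext1 x
    exact he x
  exact ⟨W, Unitary.map_mem _ (Unitary.linearIsometryEquiv.symm e).2,
    (toEuclideanCLM.injective hW).symm⟩

theorem exists_mem_unitaryGroup_eq_mul_sqrt (M : Matrix n n 𝕜) :
    ∃ W ∈ unitaryGroup n 𝕜, M = W * (posSemidef_conjTranspose_mul_self M).sqrt := by
  have hP := (posSemidef_conjTranspose_mul_self M).posSemidef_sqrt
  refine exists_mem_unitaryGroup_eq_mul_of_conjTranspose_mul_self_eq ?_
  rw [hP.1.eq, PosSemidef.sqrt_mul_self]

end PolarDecomposition

section HilbertSchmidt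

variable {m n 𝕜 : Type*} [Fintype m] [Fintype n] [RCLike 𝕜]

abbrev euclideanVec (A : Matrix m n 𝕜) : EuclideanSpace 𝕜 (n × m) := WithLp.toLp 2 A.vec

lemma inner_euclideanVec (A B : Matrix m n 𝕜) :
    ⟪A.euclideanVec, B.euclideanVec⟫_𝕜 = (Aᴴ * B).trace := by
  rw [EuclideanSpace.inner_toLp_toLp, dotProduct_comm, star_vec_dotProduct_vec]

lemma norm_euclideanVec_sq (A : Matrix m n 𝕜) : ‖A.euclideanVec‖ ^ 2 = re (A * Aᴴ).trace := by
  rw [@norm_sq_eq_re_inner 𝕜, inner_euclideanVec, trace_mul_comm]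

lemma norm_euclideanVec_mul_of_mem_unitaryGroup [DecidableEq m] {W : Matrix m m 𝕜}
    (hW : W ∈ unitaryGroup m 𝕜) (A : Matrix m n 𝕜) :
    ‖(W * A).euclideanVec‖ = ‖A.euclideanVec‖ := by
  rw [← sq_eq_sq₀ (norm_nonneg _) (norm_nonneg _), @norm_sq_eq_re_inner 𝕜, @norm_sq_eq_re_inner 𝕜,
    inner_euclideanVec, inner_euclideanVec, conjTranspose_mul, Matrix.mul_assoc,
    ← Matrix.mul_assoc Wᴴ, ← star_eq_conjTranspose, Unitary.star_mul_self_of_mem hW,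
    Matrix.one_mul]

theorem re_trace_conjTranspose_mul_sub_le [DecidableEq m] {W : Matrix m m 𝕜}
    (hW : W ∈ unitaryGroup m 𝕜) (X Y : Matrix m n 𝕜) :
    re (Wᴴ * (X * Xᴴ - Y * Yᴴ)).trace ≤
      ‖(X - Y).euclideanVec‖ * ‖(X + Y).euclideanVec‖ := by
  have hsplit : X * Xᴴ - Y * Yᴴ + (X * Xᴴ - Y * Yᴴ) =
      (X - Y) * (X + Y)ᴴ + (X + Y) * (X - Y)ᴴ := by
    simp only [conjTranspose_add, conjTranspose_sub, Matrix.sub_mul, Matrix.add_mul,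
      Matrix.mul_sub, Matrix.mul_add]
    abel
  have hbound (U V : Matrix m n 𝕜) :
      re (Wᴴ * (U * Vᴴ)).trace ≤ ‖V.euclideanVec‖ * ‖U.euclideanVec‖ := by
    have htr : (Wᴴ * (U * Vᴴ)).trace = ⟪(W * V).euclideanVec, U.euclideanVec⟫_𝕜 := by
      rw [inner_euclideanVec, conjTranspose_mul, Matrix.mul_assoc, ← Matrix.mul_assoc _ U,
        trace_mul_comm]
    rw [htr, ← norm_euclideanVec_mul_of_mem_unitaryGroup hW V]
    exact re_inner_le_norm _ _
  have h2 := congrArg (fun A ↦ re (Wᴴ * A).trace) hsplit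
  simp only [Matrix.mul_add, trace_add, map_add] at h2
  linarith [hbound (X - Y) (X + Y), hbound (X + Y) (X - Y)]

end HilbertSchmidt

end Matrix

open Matrix

lemma traceNorm_nonneg {d : ℕ} (A : Matrix (Fin d) (Fin d) ℂ) : 0 ≤ traceNorm A :=
  Complex.nonneg_iff.mp (posSemidef_conjTranspose_mul_self A).posSemidef_sqrt.trace_nonneg |>.1

theorem exists_mem_unitaryGroup_traceNorm_eq {d : ℕ} (A : Matrix (Fin d) (Fin d) ℂ) :
    ∃ W ∈ unitaryGroup (Fin d) ℂ, traceNorm A = (Wᴴ * A).trace.re := by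
  obtain ⟨W, hW, hA⟩ := exists_mem_unitaryGroup_eq_mul_sqrt A
  refine ⟨W, hW, ?_⟩
  conv_rhs => rw [hA, ← Matrix.mul_assoc, ← star_eq_conjTranspose, Unitary.star_mul_self_of_mem hW,
    Matrix.one_mul]
  rfl

theorem traceNorm_mul_conjTranspose_sub_sq_le {d : ℕ} {n : Type*} [Fintype n]
    (X Y : Matrix (Fin d) n ℂ) :
    traceNorm (X * Xᴴ - Y * Yᴴ) ^ 2 ≤
      (‖X.euclideanVec‖ ^ 2 + ‖Y.euclideanVec‖ ^ 2) ^ 2 -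
        4 * re ⟪X.euclideanVec, Y.euclideanVec⟫_ℂ ^ 2 := by
  obtain ⟨W, hW, hnorm⟩ := exists_mem_unitaryGroup_traceNorm_eq (X * Xᴴ - Y * Yᴴ)
  have hle := re_trace_conjTranspose_mul_sub_le hW X Y
  rw [RCLike.re_to_complex, ← hnorm] at hle
  rw [← norm_sub_sq_mul_norm_add_sq, ← mul_pow]
  exact pow_le_pow_left₀ (traceNorm_nonneg _) hle 2

/-- For positive semidefinite matrices `ρ, σ`,
`‖ρ − σ‖₁² ≤ (Tr ρ + Tr σ)² − 4 ‖√ρ √σ‖₁²`. -/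
theorem traceNorm_sub_sq_le
    {d : ℕ} {ρ σ : Matrix (Fin d) (Fin d) ℂ}
    (hρ : ρ.PosSemidef) (hσ : σ.PosSemidef) :
    traceNorm (ρ - σ) ^ 2 ≤
      (ρ.trace.re + σ.trace.re) ^ 2 - 4 * traceNorm (hρ.sqrt * hσ.sqrt) ^ 2 := by
  obtain ⟨W, hW, hAB⟩ := exists_mem_unitaryGroup_traceNorm_eq (hρ.sqrt * hσ.sqrt)
  have hA : hρ.sqrtᴴ = hρ.sqrt := hρ.posSemidef_sqrt.1.eq
  have hB : hσ.sqrtᴴ = hσ.sqrt := hσ.posSemidef_sqrt.1.eq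
  set X := hρ.sqrt * W
  have hρX : X * Xᴴ = ρ := by
    rw [conjTranspose_mul, hA, Matrix.mul_assoc, ← Matrix.mul_assoc W, ← star_eq_conjTranspose,
      Unitary.mul_star_self_of_mem hW, Matrix.one_mul, hρ.sqrt_mul_self]
  have hσB : hσ.sqrt * hσ.sqrtᴴ = σ := by rw [hB, hσ.sqrt_mul_self]
  have hXB : re ⟪X.euclideanVec, hσ.sqrt.euclideanVec⟫_ℂ = traceNorm (hρ.sqrt * hσ.sqrt) := by
    rw [inner_euclideanVec, hAB, conjTranspose_mul, hA, Matrix.mul_assoc, RCLike.re_to_complex]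
  have key := traceNorm_mul_conjTranspose_sub_sq_le X hσ.sqrt
  rwa [norm_euclideanVec_sq, norm_euclideanVec_sq, hρX, hσB, hXB, RCLike.re_to_complex,
    RCLike.re_to_complex] at key
end

section
/- Let Γ_1,…,Γ_n be Hermitian d×d complex matrices and γ_1,…,γ_n real numbers, let S be the corresponding constraint set, and assume every element of S has trace 1. Let G be a CPTNI map from d×d to d'×d' complex matrices with d' ≥ 2, let Z be a pinching channel on d'×d' complex matrices, and let ε satisfy 0 < ε ≤ 1/(e·(d'−1)). Define f, f_ε and ζ_ε as follows: f(ρ) = H(Z(G(ρ))) − H(G(ρ)), G_ε(ρ) = (1−ε)·G(ρ) + (ε/d')·I_{d'}, f_ε(ρ) = H(Z(G_ε(ρ))) − H(G_ε(ρ)), ζ_ε = 2ε(d'−1)·log(d'/(ε(d'−1))). If ρ* ∈ S satisfies f(ρ*) ≤ f(σ) for all σ ∈ S, and ρ_ε* ∈ S satisfies f_ε(ρ_ε*) ≤ f_ε(σ) for all σ ∈ S, then |f(ρ*) − f_ε(ρ_ε*)| ≤ ζ_ε. -/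
open scoped BigOperators ComplexOrder Matrix

/-- The von Neumann entropy `H(σ) = −Σ λ_i log λ_i` of a Hermitian matrix
(`0` for non-Hermitian matrices; `log` is the natural logarithm, `0 log 0 = 0`). -/
noncomputable def vnEntropy {d : ℕ} (A : Matrix (Fin d) (Fin d) ℂ) : ℝ :=
  if hA : A.IsHermitian then -∑ i, hA.eigenvalues i * Real.log (hA.eigenvalues i) else 0

/-!
The perturbation `G ↦ (1 - ε) G + (ε / d') 1` commutes with the pinching `Z`, because `Z` is
linear and fixes the identity. Hence both entropies in `f_ε(ρ)` are entropies of depolarized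
versions of the states `Z(G ρ)` and `G ρ` appearing in `f(ρ)`, which are positive semidefinite
of trace at most one. Diagonalizing, depolarizing moves each eigenvalue `λ` to
`(1 - ε) λ + ε / d'`, and an elementary estimate on `-x log x` shows that this changes the entropy
by at most `ζ_ε / 2`. So `|f - f_ε| ≤ ζ_ε` on `S`, and two functions that are uniformly
`ζ_ε`-close have minima that are `ζ_ε`-close.
-/

open Real Matrix

namespace Real

lemma negMulLog_le_add_mul_sub {x y : ℝ} (hx : 0 < x) (hy : 0 ≤ y) :
    negMulLog y ≤ negMulLog x + (-log x - 1) * (y - x) := by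
  rcases hy.eq_or_lt with rfl | hy
  · rw [negMulLog_zero, negMulLog]
    linarith
  have h := mul_le_mul_of_nonneg_left (log_le_sub_one_of_pos (div_pos hx hy)) hy.le
  rw [log_div hx.ne' hy.ne', mul_sub_one, mul_div_cancel₀ _ hy.ne'] at h
  simp only [negMulLog]
  nlinarith

lemma negMulLog_le_negMulLog {x y : ℝ} (hx : 0 ≤ x) (hxy : x ≤ y) (hy : y ≤ (exp 1)⁻¹) :
    negMulLog x ≤ negMulLog y := by
  rcases (hx.trans hxy).eq_or_lt with h | hy0
  · rw [← h, le_antisymm (hxy.trans h.ge) hx]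
  have hlog : log y ≤ -1 := by
    simpa [log_inv] using log_le_log hy0 hy
  nlinarith [negMulLog_le_add_mul_sub hy0 hx]

lemma negMulLog_add_le {x y : ℝ} (hx : 0 ≤ x) (hy : 0 ≤ y) :
    negMulLog (x + y) ≤ negMulLog x + negMulLog y := by
  rcases hx.eq_or_lt with rfl | hx
  · simp
  rcases hy.eq_or_lt with rfl | hy
  · simp
  have hlx := log_le_log hx (le_add_of_nonneg_right hy.le)
  have hly := log_le_log hy (le_add_of_nonneg_left hx.le)
  simp only [negMulLog]
  nlinarith

section Mixing

variable {ε c x : ℝ}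

lemma negMulLog_mix_sub_le_of_le (hε : 0 ≤ ε) (hεc : ε * c ≤ (exp 1)⁻¹) (hx : 0 ≤ x)
    (hxc : x ≤ c) :
    negMulLog ((1 - ε) * x + ε * c) - negMulLog x ≤ negMulLog (ε * c) := by
  have hδ : 0 ≤ ε * (c - x) := mul_nonneg hε (sub_nonneg.mpr hxc)
  have hsub := negMulLog_add_le hx hδ
  have hmono := negMulLog_le_negMulLog hδ (by nlinarith) hεc
  rw [show (1 - ε) * x + ε * c = x + ε * (c - x) by ring]
  linarith

lemma negMulLog_mix_sub_le_of_ge (hε : 0 ≤ ε) (hε1 : ε ≤ 1) (hc : 0 < c) (hcx : c ≤ x)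
    (hx1 : x ≤ 1) :
    negMulLog ((1 - ε) * x + ε * c) - negMulLog x ≤ ε * (x - c) := by
  have hx : 0 < x := hc.trans_le hcx
  have htan := negMulLog_le_add_mul_sub hx (y := (1 - ε) * x + ε * c) (by nlinarith)
  have hlog : log x ≤ 0 := log_nonpos hx.le hx1
  nlinarith [mul_nonneg hε (sub_nonneg.mpr hcx)]

lemma negMulLog_mix_sub_le (hε : 0 ≤ ε) (hε1 : ε ≤ 1) (hc : 0 < c)
    (hεc : ε * c ≤ (exp 1)⁻¹) (hx : 0 ≤ x) (hx1 : x ≤ 1) :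
    negMulLog ((1 - ε) * x + ε * c) - negMulLog x ≤ negMulLog (ε * c) + ε * x := by
  have ha : 0 ≤ negMulLog (ε * c) :=
    negMulLog_nonneg (by positivity) (hεc.trans (inv_le_one_of_one_le₀ (one_le_exp zero_le_one)))
  rcases le_total x c with hxc | hcx
  · linarith [negMulLog_mix_sub_le_of_le hε hεc hx hxc, mul_nonneg hε hx]
  · linarith [negMulLog_mix_sub_le_of_ge hε hε1 hc hcx hx1, mul_nonneg hε hc.le]

lemma le_negMulLog_mix_sub (hε : 0 ≤ ε) (hε1 : ε ≤ 1) (hc : 0 < c)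
    (hx : 0 ≤ x) :
    ε * (log c + 1) * (x - c) ≤ negMulLog ((1 - ε) * x + ε * c) - negMulLog x := by
  have hconc := concaveOn_negMulLog.2 (Set.mem_Ici.mpr hx) (Set.mem_Ici.mpr hc.le)
    (sub_nonneg.mpr hε1) hε (by ring)
  have htan := negMulLog_le_add_mul_sub hc hx
  simp only [smul_eq_mul] at hconc
  nlinarith

end Mixing

lemma one_add_log_le_log_div {D t : ℝ} (hD : 0 < D) (ht : 0 < t) (hte : t ≤ (exp 1)⁻¹) :
    1 + log D ≤ log (D / t) := by
  have := log_le_log ht hte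
  rw [log_inv, log_exp] at this
  rw [log_div hD.ne' ht.ne']
  linarith

end Real

section MixingSum

variable {ι : Type*} [Fintype ι] {ε : ℝ} {lam : ι → ℝ}

theorem sum_negMulLog_mix_sub_le {c : ℝ} (hε : 0 ≤ ε) (hε1 : ε ≤ 1) (hc : 0 < c)
    (hεc : ε * c ≤ (exp 1)⁻¹) (hlam : ∀ i, 0 ≤ lam i) (hsum : ∑ i, lam i ≤ 1) :
    ∑ i, (negMulLog ((1 - ε) * lam i + ε * c) - negMulLog (lam i)) ≤
      max (Fintype.card ι * negMulLog (ε * c))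
        ((Fintype.card ι - 1) * negMulLog (ε * c) + ε * (1 - c)) := by
  classical
  have hlam1 : ∀ i, lam i ≤ 1 := fun i =>
    (Finset.single_le_sum (fun j _ => hlam j) (Finset.mem_univ i)).trans hsum
  by_cases hsmall : ∀ i, lam i ≤ c
  · refine le_max_of_le_left ?_
    calc _ ≤ ∑ _i : ι, negMulLog (ε * c) := Finset.sum_le_sum fun i _ =>
          negMulLog_mix_sub_le_of_le hε hεc (hlam i) (hsmall i)
      _ = _ := by simp
  push Not at hsmall
  obtain ⟨j, hj⟩ := hsmall
  refine le_max_of_le_right ?_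
  -- the bound `negMulLog (ε * c) + ε * lam i` for every coordinate would be too weak when
  -- `card ι = 2`; the coordinate `j` above `c` costs only `ε * (lam j - c)`
  have hrest := Finset.sum_le_sum fun i (_ : i ∈ Finset.univ.erase j) =>
    negMulLog_mix_sub_le hε hε1 hc hεc (hlam i) (hlam1 i)
  rw [Finset.sum_add_distrib, Finset.sum_const, Finset.card_erase_of_mem (Finset.mem_univ j),
    Finset.card_univ, nsmul_eq_mul, Nat.cast_sub (Fintype.card_pos_iff.mpr ⟨j⟩), Nat.cast_one,
    ← Finset.mul_sum] at hrest
  have htot : lam j + ∑ i ∈ Finset.univ.erase j, lam i ≤ 1 := by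
    rwa [Finset.add_sum_erase _ _ (Finset.mem_univ j)]
  rw [← Finset.add_sum_erase _ _ (Finset.mem_univ j)]
  nlinarith [negMulLog_mix_sub_le_of_ge hε hε1 hc hj.le (hlam1 j),
    mul_le_mul_of_nonneg_left htot hε]

theorem neg_le_sum_negMulLog_mix_sub [Nonempty ι] (hε : 0 ≤ ε) (hε1 : ε ≤ 1)
    (hlam : ∀ i, 0 ≤ lam i) (hsum : ∑ i, lam i ≤ 1) :
    -ε ≤ ∑ i, (negMulLog ((1 - ε) * lam i + ε * (Fintype.card ι : ℝ)⁻¹) - negMulLog (lam i)) := by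
  have hD : (1 : ℝ) ≤ Fintype.card ι := by exact_mod_cast Fintype.card_pos
  have hlow := Finset.sum_le_sum fun i (_ : i ∈ Finset.univ) =>
    le_negMulLog_mix_sub hε hε1 (inv_pos.mpr (zero_lt_one.trans_le hD)) (hlam i)
  rw [← Finset.mul_sum, Finset.sum_sub_distrib, Finset.sum_const, Finset.card_univ, nsmul_eq_mul,
    log_inv, mul_inv_cancel₀ (by positivity)] at hlow
  have hlogD : 0 ≤ log (Fintype.card ι) := log_nonneg hD
  have hsum0 : 0 ≤ ∑ i, lam i := Finset.sum_nonneg fun i _ => hlam i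
  nlinarith [mul_nonneg hε (add_nonneg hsum0 (mul_nonneg hlogD (sub_nonneg.2 hsum)))]

end MixingSum

theorem abs_sum_negMulLog_mix_sub_le {k : ℕ} (hk : 2 ≤ k) {ε : ℝ} (hε0 : 0 < ε)
    (hεe : ε ≤ 1 / (exp 1 * ((k : ℝ) - 1))) (lam : Fin k → ℝ) (hlam : ∀ i, 0 ≤ lam i)
    (hsum : ∑ i, lam i ≤ 1) :
    |∑ i, (negMulLog ((1 - ε) * lam i + ε / k) - negMulLog (lam i))| ≤
      ε * ((k : ℝ) - 1) * log ((k : ℝ) / (ε * ((k : ℝ) - 1))) := by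
  have : NeZero k := ⟨by omega⟩
  set D : ℝ := (k : ℝ) with hDdef
  set L := log (D / (ε * (D - 1)))
  have hD : 2 ≤ D := by rw [hDdef]; exact_mod_cast hk
  have hεD : ε * (D - 1) ≤ (exp 1)⁻¹ := by
    rw [← one_div, le_div_iff₀ (exp_pos 1)]
    linarith [(le_div_iff₀ (mul_pos (exp_pos 1) (by linarith))).mp hεe]
  have hε1 : ε ≤ 1 := by nlinarith [inv_le_one_of_one_le₀ (one_le_exp zero_le_one)]
  have hL : 1 + log D ≤ L := one_add_log_le_log_div (by positivity) (by nlinarith) hεD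
  have hlogD : 0 ≤ log D := log_nonneg (by linarith)
  have hlogD1 : log (D - 1) ≤ D - 2 := by linarith [log_le_sub_one_of_pos (by linarith : 0 < D - 1)]
  have hεc : ε * D⁻¹ ≤ (exp 1)⁻¹ := by
    calc ε * D⁻¹ ≤ ε * 1 := mul_le_mul_of_nonneg_left (inv_le_one_of_one_le₀ (by linarith)) hε0.le
      _ ≤ ε * (D - 1) := mul_le_mul_of_nonneg_left (by linarith) hε0.le
      _ ≤ (exp 1)⁻¹ := hεD
  have hD0 : D ≠ 0 := by positivity
  have hDinv : D * (ε * D⁻¹) = ε := by field_simp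
  -- `negMulLog (ε / k) = (ε / k) * log (k / ε)`, and `k / ε = e^L * (k - 1)`
  have ha : negMulLog (ε * D⁻¹) = ε * D⁻¹ * (L + log (D - 1)) := by
    have hD1 : D - 1 ≠ 0 := by linarith
    have hsplit : L + log (D - 1) = -log (ε * D⁻¹) := by
      rw [← log_mul (by positivity) (by linarith), ← log_inv]
      congr 1
      field_simp
    rw [negMulLog, hsplit]
    ring
  have hcard : (Fintype.card (Fin k) : ℝ) = D := by simp [hDdef]
  have hupper := sum_negMulLog_mix_sub_le hε0.le hε1 (by positivity) hεc hlam hsum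
  have hlower := neg_le_sum_negMulLog_mix_sub hε0.le hε1 hlam hsum
  rw [hcard, ha] at hupper
  rw [hcard] at hlower
  simp only [div_eq_mul_inv ε]
  have hL1 : 0 ≤ (D - 2) * (L - 1) := mul_nonneg (by linarith) (by linarith)
  refine abs_le.mpr ⟨by nlinarith, hupper.trans (max_le ?_ ?_)⟩
  · calc D * (ε * D⁻¹ * (L + log (D - 1))) = ε * (L + log (D - 1)) := by
          rw [← mul_assoc, hDinv]
      _ ≤ ε * (D - 1) * L := by nlinarith
  · calc (D - 1) * (ε * D⁻¹ * (L + log (D - 1))) + ε * (1 - D⁻¹)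
          = (D - 1) * (ε * D⁻¹) * (1 + L + log (D - 1)) := by
            field_simp; ring
      _ ≤ (D - 1) * (ε * D⁻¹) * (D * L) :=
          mul_le_mul_of_nonneg_left (by nlinarith) (by nlinarith)
      _ = ε * (D - 1) * L := by field_simp

lemma Matrix.PosSemidef.trace_mul_nonneg_s12 {n : Type*} [Fintype n] {M ρ : Matrix n n ℂ}
    (hM : M.PosSemidef) (hρ : ρ.PosSemidef) : 0 ≤ (M * ρ).trace := by
  classical
  open scoped MatrixOrder in
  obtain ⟨B, rfl⟩ := CStarAlgebra.nonneg_iff_eq_star_mul_self.mp hρ.nonneg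
  rw [← mul_assoc, trace_mul_comm, ← mul_assoc]
  exact (hM.mul_mul_conjTranspose_same B).trace_nonneg

section Channels

variable {ι m n : Type*} [Fintype ι] [Fintype m] [Fintype n]

def krausMap (K : ι → Matrix m n ℂ) (ρ : Matrix n n ℂ) : Matrix m m ℂ :=
  ∑ i, K i * ρ * (K i)ᴴ

def pinching (P : ι → Matrix n n ℂ) (σ : Matrix n n ℂ) : Matrix n n ℂ :=
  ∑ j, P j * σ * P j

lemma Matrix.PosSemidef.krausMap {ρ : Matrix n n ℂ} (hρ : ρ.PosSemidef) (K : ι → Matrix m n ℂ) :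
    (krausMap K ρ).PosSemidef :=
  posSemidef_sum _ fun i _ => hρ.mul_mul_conjTranspose_same (K i)

lemma trace_krausMap_le [DecidableEq n] {K : ι → Matrix m n ℂ}
    (hK : (1 - ∑ i, (K i)ᴴ * K i).PosSemidef) {ρ : Matrix n n ℂ} (hρ : ρ.PosSemidef) :
    (krausMap K ρ).trace ≤ ρ.trace := by
  have hcycle : (krausMap K ρ).trace = ((∑ i, (K i)ᴴ * K i) * ρ).trace := by
    simp only [krausMap, trace_sum, Finset.sum_mul]
    exact Finset.sum_congr rfl fun i _ => trace_mul_cycle (K i) ρ (K i)ᴴ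
  have hsub : ρ - (∑ i, (K i)ᴴ * K i) * ρ = (1 - ∑ i, (K i)ᴴ * K i) * ρ := by
    rw [sub_mul, one_mul]
  rw [hcycle, ← sub_nonneg, ← trace_sub, hsub]
  exact hK.trace_mul_nonneg_s12 hρ

lemma Matrix.PosSemidef.pinching {σ : Matrix n n ℂ} (hσ : σ.PosSemidef)
    {P : ι → Matrix n n ℂ} (hPherm : ∀ j, (P j)ᴴ = P j) : (pinching P σ).PosSemidef :=
  posSemidef_sum _ fun j _ => by simpa only [hPherm] using hσ.mul_mul_conjTranspose_same (P j)

variable [DecidableEq n] {P : ι → Matrix n n ℂ}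

lemma trace_pinching (hPidem : ∀ j, P j * P j = P j) (hPsum : ∑ j, P j = 1) (σ : Matrix n n ℂ) :
    (pinching P σ).trace = σ.trace := by
  simp only [pinching, trace_sum, trace_mul_cycle _ σ, hPidem]
  rw [← trace_sum, ← Finset.sum_mul, hPsum, one_mul]

lemma pinching_smul_add_smul_one (hPidem : ∀ j, P j * P j = P j) (hPsum : ∑ j, P j = 1) (a b : ℝ)
    (σ : Matrix n n ℂ) : pinching P (a • σ + b • 1) = a • pinching P σ + b • 1 := by
  simp only [pinching, mul_add, add_mul, mul_smul_comm, smul_mul_assoc, mul_one, hPidem,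
    Finset.sum_add_distrib, ← Finset.smul_sum, hPsum]

end Channels

noncomputable def depolarize {k : ℕ} (ε : ℝ) (σ : Matrix (Fin k) (Fin k) ℂ) :
    Matrix (Fin k) (Fin k) ℂ :=
  (1 - ε) • σ + (ε / k) • 1

lemma pinching_depolarize {ι : Type*} [Fintype ι] {k : ℕ} {P : ι → Matrix (Fin k) (Fin k) ℂ}
    (hPidem : ∀ j, P j * P j = P j) (hPsum : ∑ j, P j = 1) (ε : ℝ) (σ : Matrix (Fin k) (Fin k) ℂ) :
    pinching P (depolarize ε σ) = depolarize ε (pinching P σ) :=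
  pinching_smul_add_smul_one hPidem hPsum _ _ σ

namespace Matrix.IsHermitian

variable {n : Type*} [Fintype n] [DecidableEq n] {A : Matrix n n ℂ}

lemma map_eigenvalues_cfc (hA : A.IsHermitian) (f : ℝ → ℝ) (hB : (cfc f A).IsHermitian) :
    Finset.univ.val.map hB.eigenvalues = Finset.univ.val.map (f ∘ hA.eigenvalues) := by
  have hroots := hB.roots_charpoly_eq_eigenvalues
  rw [hA.charpoly_cfc_eq, Polynomial.roots_prod _ _ (Finset.prod_ne_zero_iff.mpr
    fun i _ => Polynomial.X_sub_C_ne_zero _)] at hroots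
  simp only [Polynomial.roots_X_sub_C, Multiset.bind_singleton] at hroots
  refine Multiset.map_injective Complex.ofReal_injective ?_
  rw [Multiset.map_map, Multiset.map_map]
  exact hroots.symm

end Matrix.IsHermitian

lemma vnEntropy_eq_sum_negMulLog {k : ℕ} {A : Matrix (Fin k) (Fin k) ℂ} (hA : A.IsHermitian) :
    vnEntropy A = ∑ i, negMulLog (hA.eigenvalues i) := by
  simp only [vnEntropy, dif_pos hA, negMulLog, neg_mul, Finset.sum_neg_distrib]

lemma vnEntropy_cfc {k : ℕ} {A : Matrix (Fin k) (Fin k) ℂ} (hA : A.IsHermitian) (f : ℝ → ℝ) :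
    vnEntropy (cfc f A) = ∑ i, negMulLog (f (hA.eigenvalues i)) := by
  have hB : (cfc f A).IsHermitian := IsSelfAdjoint.cfc
  calc vnEntropy (cfc f A) = ((Finset.univ.val.map hB.eigenvalues).map negMulLog).sum := by
        rw [vnEntropy_eq_sum_negMulLog hB, Multiset.map_map]; rfl
    _ = _ := by rw [hA.map_eigenvalues_cfc f hB, Multiset.map_map]; rfl

lemma depolarize_eq_cfc {k : ℕ} {A : Matrix (Fin k) (Fin k) ℂ} (hA : A.IsHermitian) (ε : ℝ) :
    depolarize ε A = cfc (fun x => (1 - ε) * x + ε / k) A := by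
  rw [cfc_add_const _ _ A, cfc_const_mul_id _ A hA.isSelfAdjoint, Algebra.algebraMap_eq_smul_one]
  rfl

theorem abs_vnEntropy_depolarize_sub_le {k : ℕ} (hk : 2 ≤ k) {ε : ℝ} (hε0 : 0 < ε)
    (hεe : ε ≤ 1 / (exp 1 * ((k : ℝ) - 1))) {A : Matrix (Fin k) (Fin k) ℂ} (hA : A.PosSemidef)
    (htr : A.trace ≤ 1) :
    |vnEntropy (depolarize ε A) - vnEntropy A| ≤
      ε * ((k : ℝ) - 1) * log ((k : ℝ) / (ε * ((k : ℝ) - 1))) := by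
  have hsum : ∑ i, hA.1.eigenvalues i ≤ 1 := by
    rw [hA.1.trace_eq_sum_eigenvalues] at htr
    exact Complex.real_le_real.mp (by simpa using htr)
  rw [depolarize_eq_cfc hA.1, vnEntropy_cfc hA.1, vnEntropy_eq_sum_negMulLog hA.1,
    ← Finset.sum_sub_distrib]
  exact abs_sum_negMulLog_mix_sub_le hk hε0 hεe _ hA.eigenvalues_nonneg hsum

theorem abs_coherence_sub_coherence_depolarize_le {ι : Type*} [Fintype ι] {k : ℕ} (hk : 2 ≤ k)
    {ε : ℝ} (hε0 : 0 < ε) (hεe : ε ≤ 1 / (exp 1 * ((k : ℝ) - 1)))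
    {P : ι → Matrix (Fin k) (Fin k) ℂ} (hPherm : ∀ j, (P j)ᴴ = P j) (hPidem : ∀ j, P j * P j = P j)
    (hPsum : ∑ j, P j = 1) {σ : Matrix (Fin k) (Fin k) ℂ} (hσ : σ.PosSemidef) (htr : σ.trace ≤ 1) :
    |(vnEntropy (pinching P σ) - vnEntropy σ) -
        (vnEntropy (pinching P (depolarize ε σ)) - vnEntropy (depolarize ε σ))| ≤
      2 * ε * ((k : ℝ) - 1) * log ((k : ℝ) / (ε * ((k : ℝ) - 1))) := by
  have hpin := abs_vnEntropy_depolarize_sub_le hk hε0 hεe (hσ.pinching hPherm)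
    (by rwa [trace_pinching hPidem hPsum])
  have hdep := abs_vnEntropy_depolarize_sub_le hk hε0 hεe hσ htr
  rw [pinching_depolarize hPidem hPsum]
  calc _ = |(vnEntropy (depolarize ε (pinching P σ)) - vnEntropy (pinching P σ)) -
        (vnEntropy (depolarize ε σ) - vnEntropy σ)| := by rw [← abs_neg]; ring_nf
    _ ≤ _ := (abs_sub _ _).trans (by linarith)

lemma abs_sub_le_of_isMinOn {α β : Type*} [AddCommGroup β] [LinearOrder β] [IsOrderedAddMonoid β]
    {f g : α → β} {s : Set α} {c : β} {a b : α} (hfg : ∀ x ∈ s, |f x - g x| ≤ c)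
    (ha : IsMinOn f s a) (hb : IsMinOn g s b) (has : a ∈ s) (hbs : b ∈ s) :
    |f a - g b| ≤ c := by
  obtain ⟨hfa, -⟩ := abs_le.mp (hfg a has)
  obtain ⟨-, hgb⟩ := abs_le.mp (hfg b hbs)
  exact abs_le.mpr ⟨hfa.trans (sub_le_sub_left (isMinOn_iff.mp hb a has) _),
    (sub_le_sub_right (isMinOn_iff.mp ha b hbs) _).trans hgb⟩

theorem perturbed_optimal_values_close_general
    {d d' n m p : ℕ} (hd' : 2 ≤ d')
    (Γ : Fin n → Matrix (Fin d) (Fin d) ℂ)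
    (γ : Fin n → ℝ)
    (S : Set (Matrix (Fin d) (Fin d) ℂ))
    (hS : S = {ρ | ρ.PosSemidef ∧ ∀ i, (Γ i * ρ).trace = (γ i : ℂ)})
    (hStrace : ∀ ρ ∈ S, ρ.trace = 1)
    (K : Fin m → Matrix (Fin d') (Fin d) ℂ)
    (hK : ((1 : Matrix (Fin d) (Fin d) ℂ) - ∑ i, (K i)ᴴ * K i).PosSemidef)
    (G : Matrix (Fin d) (Fin d) ℂ → Matrix (Fin d') (Fin d') ℂ)
    (hG : G = fun X => ∑ i, K i * X * (K i)ᴴ)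
    (P : Fin p → Matrix (Fin d') (Fin d') ℂ)
    (hP1 : ∀ j, (P j)ᴴ = P j) (hP2 : ∀ j, P j * P j = P j)
    (hP4 : ∑ j, P j = 1)
    (Z : Matrix (Fin d') (Fin d') ℂ → Matrix (Fin d') (Fin d') ℂ)
    (hZ : Z = fun X => ∑ j, P j * X * P j)
    (ε : ℝ) (hε0 : 0 < ε) (hεe : ε ≤ 1 / (Real.exp 1 * ((d' : ℝ) - 1)))
    (f fε : Matrix (Fin d) (Fin d) ℂ → ℝ)
    (hf : f = fun X => vnEntropy (Z (G X)) - vnEntropy (G X))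
    (Gε : Matrix (Fin d) (Fin d) ℂ → Matrix (Fin d') (Fin d') ℂ)
    (hGε : Gε = fun X => (1 - ε) • G X + (ε / d') • (1 : Matrix (Fin d') (Fin d') ℂ))
    (hfε : fε = fun X => vnEntropy (Z (Gε X)) - vnEntropy (Gε X))
    (ζ : ℝ) (hζ : ζ = 2 * ε * ((d' : ℝ) - 1) * Real.log ((d' : ℝ) / (ε * ((d' : ℝ) - 1))))
    (ρstar : Matrix (Fin d) (Fin d) ℂ) (hρstar : ρstar ∈ S)
    (hρstarMin : ∀ σ ∈ S, f ρstar ≤ f σ)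
    (ρεstar : Matrix (Fin d) (Fin d) ℂ) (hρεstar : ρεstar ∈ S)
    (hρεstarMin : ∀ σ ∈ S, fε ρεstar ≤ fε σ) :
    |f ρstar - fε ρεstar| ≤ ζ := by
  subst hS hG hZ hGε hζ
  refine abs_sub_le_of_isMinOn (fun ρ hρ => ?_) (isMinOn_iff.mpr hρstarMin)
    (isMinOn_iff.mpr hρεstarMin) hρstar hρεstar
  rw [hf, hfε]
  have htr : (krausMap K ρ).trace ≤ 1 := hStrace ρ hρ ▸ trace_krausMap_le hK hρ.1
  exact abs_coherence_sub_coherence_depolarize_le hd' hε0 hεe hP1 hP2 hP4 (hρ.1.krausMap K) htr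

/-- The optimal values of the original and perturbed problems are
within `ζ_ε` of each other: if `ρ*` minimizes `f` over the constraint set `S`
(all of whose elements have trace 1) and `ρ_ε*` minimizes `f_ε` over `S`, then
`|f(ρ*) − f_ε(ρ_ε*)| ≤ ζ_ε`. -/
theorem perturbed_optimal_values_close
    {d d' n m p : ℕ} (hd' : 2 ≤ d')
    (Γ : Fin n → Matrix (Fin d) (Fin d) ℂ) (hΓ : ∀ i, (Γ i).IsHermitian)
    (γ : Fin n → ℝ)
    (S : Set (Matrix (Fin d) (Fin d) ℂ))
    (hS : S = {ρ | ρ.PosSemidef ∧ ∀ i, (Γ i * ρ).trace = (γ i : ℂ)})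
    (hStrace : ∀ ρ ∈ S, ρ.trace = 1)
    (K : Fin m → Matrix (Fin d') (Fin d) ℂ)
    (hK : ((1 : Matrix (Fin d) (Fin d) ℂ) - ∑ i, (K i)ᴴ * K i).PosSemidef)
    (G : Matrix (Fin d) (Fin d) ℂ → Matrix (Fin d') (Fin d') ℂ)
    (hG : G = fun X => ∑ i, K i * X * (K i)ᴴ)
    (P : Fin p → Matrix (Fin d') (Fin d') ℂ)
    (hP1 : ∀ j, (P j)ᴴ = P j) (hP2 : ∀ j, P j * P j = P j)
    (hP3 : ∀ j k, j ≠ k → P j * P k = 0)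
    (hP4 : ∑ j, P j = 1)
    (Z : Matrix (Fin d') (Fin d') ℂ → Matrix (Fin d') (Fin d') ℂ)
    (hZ : Z = fun X => ∑ j, P j * X * P j)
    (ε : ℝ) (hε0 : 0 < ε) (hεe : ε ≤ 1 / (Real.exp 1 * ((d' : ℝ) - 1)))
    (f fε : Matrix (Fin d) (Fin d) ℂ → ℝ)
    (hf : f = fun X => vnEntropy (Z (G X)) - vnEntropy (G X))
    (Gε : Matrix (Fin d) (Fin d) ℂ → Matrix (Fin d') (Fin d') ℂ)
    (hGε : Gε = fun X => (1 - ε) • G X + (ε / d') • (1 : Matrix (Fin d') (Fin d') ℂ))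
    (hfε : fε = fun X => vnEntropy (Z (Gε X)) - vnEntropy (Gε X))
    (ζ : ℝ) (hζ : ζ = 2 * ε * ((d' : ℝ) - 1) * Real.log ((d' : ℝ) / (ε * ((d' : ℝ) - 1))))
    (ρstar : Matrix (Fin d) (Fin d) ℂ) (hρstar : ρstar ∈ S)
    (hρstarMin : ∀ σ ∈ S, f ρstar ≤ f σ)
    (ρεstar : Matrix (Fin d) (Fin d) ℂ) (hρεstar : ρεstar ∈ S)
    (hρεstarMin : ∀ σ ∈ S, fε ρεstar ≤ fε σ) :
    |f ρstar - fε ρεstar| ≤ ζ :=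
  perturbed_optimal_values_close_general hd' Γ γ S hS hStrace K hK G hG P hP1 hP2 hP4 Z hZ ε hε0 hεe
    f fε hf Gε hGε hfε ζ hζ ρstar hρstar hρstarMin ρεstar hρεstar hρεstarMin
end
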